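/- arXiv:1606.08661 — 4 statements merged into one kernel-verified Lean document; each statement's English description precedes it below -/
import Mathlib

section
/- For every d ≥ 3 and n ≥ 2, there exists a feasible point of the relaxed axial d-dimensional assignment problem on n items that is a vertex (extreme point) of the feasible polytope but does not have all entries in {0,1}. Equivalently, the feasible polytope of the relaxed d-AP is not the convex hull of its integer points for d ≥ 3. -/
/-- The feasible region of the relaxed axial `d`-dimensional assignment problem on `n`
items. -/
def APFeasible (d n : ℕ) : Set ((Fin d → Fin n) → ℝ) :=
  {x | (∀ i, 0 ≤ x i) ∧
    ∀ (k : Fin d) (m : Fin n),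
      ∑ i ∈ Finset.univ.filter (fun i : Fin d → Fin n => i k = m), x i = 1}

namespace APaux

variable {d n : ℕ}

def k0 (hd : 3 ≤ d) : Fin d := ⟨0, by omega⟩
def k1 (hd : 3 ≤ d) : Fin d := ⟨1, by omega⟩
def k2 (hd : 3 ≤ d) : Fin d := ⟨2, by omega⟩
def v0 (hn : 2 ≤ n) : Fin n := ⟨0, by omega⟩
def v1 (hn : 2 ≤ n) : Fin n := ⟨1, by omega⟩

lemma k1_ne_k0 (hd : 3 ≤ d) : k1 hd ≠ k0 hd := by simp [k0, k1, Fin.ext_iff]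
lemma k2_ne_k0 (hd : 3 ≤ d) : k2 hd ≠ k0 hd := by simp [k0, k2, Fin.ext_iff]
lemma k2_ne_k1 (hd : 3 ≤ d) : k2 hd ≠ k1 hd := by simp [k1, k2, Fin.ext_iff]
@[simp] lemma v0_val (hn : 2 ≤ n) : (v0 hn).val = 0 := rfl
@[simp] lemma v1_val (hn : 2 ≤ n) : (v1 hn).val = 1 := rfl
lemma v0_ne_v1 (hn : 2 ≤ n) : v0 hn ≠ v1 hn := by simp [v0, v1, Fin.ext_iff]

def pa (hd : 3 ≤ d) (hn : 2 ≤ n) : Fin d → Fin n := fun _ => v0 hn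
def pb (hd : 3 ≤ d) (hn : 2 ≤ n) : Fin d → Fin n :=
  fun k => if k = k0 hd then v0 hn else v1 hn
def pc (hd : 3 ≤ d) (hn : 2 ≤ n) : Fin d → Fin n :=
  fun k => if k = k1 hd then v0 hn else v1 hn
def pp (hd : 3 ≤ d) (hn : 2 ≤ n) : Fin d → Fin n :=
  fun k => if k = k0 hd ∨ k = k1 hd then v1 hn else v0 hn

lemma pa_ne_pb (hd : 3 ≤ d) (hn : 2 ≤ n) : pa hd hn ≠ pb hd hn := by
  intro h
  have := congrFun h (k1 hd)
  simp [pa, pb, k1_ne_k0, v0_ne_v1 hn] at this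
lemma pa_ne_pc (hd : 3 ≤ d) (hn : 2 ≤ n) : pa hd hn ≠ pc hd hn := by
  intro h
  have := congrFun h (k0 hd)
  simp [pa, pc, (k1_ne_k0 hd).symm, v0_ne_v1 hn] at this
lemma pa_ne_pp (hd : 3 ≤ d) (hn : 2 ≤ n) : pa hd hn ≠ pp hd hn := by
  intro h
  have := congrFun h (k0 hd)
  simp [pa, pp, v0_ne_v1 hn] at this
lemma pb_ne_pc (hd : 3 ≤ d) (hn : 2 ≤ n) : pb hd hn ≠ pc hd hn := by
  intro h
  have := congrFun h (k0 hd)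
  simp [pb, pc, (k1_ne_k0 hd).symm, v0_ne_v1 hn] at this
lemma pb_ne_pp (hd : 3 ≤ d) (hn : 2 ≤ n) : pb hd hn ≠ pp hd hn := by
  intro h
  have := congrFun h (k0 hd)
  simp [pb, pp, v0_ne_v1 hn] at this
lemma pc_ne_pp (hd : 3 ≤ d) (hn : 2 ≤ n) : pc hd hn ≠ pp hd hn := by
  intro h
  have := congrFun h (k1 hd)
  simp [pc, pp, k1_ne_k0, v0_ne_v1 hn] at this


/-- condition of being a constant tuple with value of index ≥ 2 -/
def C (hd : 3 ≤ d) (i : Fin d → Fin n) : Prop :=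
  2 ≤ (i (k0 hd)).val ∧ ∀ j, i j = i (k0 hd)

instance (hd : 3 ≤ d) (i : Fin d → Fin n) : Decidable (C hd i) := by
  unfold C; infer_instance

lemma sum_delta (k : Fin d) (m : Fin n) (t : Fin d → Fin n) (r : ℝ) :
    ∑ i ∈ Finset.univ.filter (fun i : Fin d → Fin n => i k = m), (if i = t then r else 0)
      = if t k = m then r else 0 := by
  rw [Finset.sum_ite_eq']
  simp

lemma sum_two (k : Fin d) (m : Fin n) (s t : Fin d → Fin n) (hst : s ≠ t)
    (hs : s k = m) (ht : t k = m) (w : (Fin d → Fin n) → ℝ)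
    (hz : ∀ i, i k = m → i ≠ s → i ≠ t → w i = 0) :
    ∑ i ∈ Finset.univ.filter (fun i : Fin d → Fin n => i k = m), w i = w s + w t := by
  have h : ∀ i ∈ Finset.univ.filter (fun i : Fin d → Fin n => i k = m),
      w i = (if i = s then w s else 0) + (if i = t then w t else 0) := by
    intro i hi
    simp only [Finset.mem_filter, Finset.mem_univ, true_and] at hi
    by_cases h1 : i = s
    · subst h1; simp [hst]
    · by_cases h2 : i = t
      · subst h2; simp [Ne.symm hst]
      · simp [h1, h2, hz i hi h1 h2]
  rw [Finset.sum_congr rfl h, Finset.sum_add_distrib, sum_delta, sum_delta, if_pos hs, if_pos ht]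

lemma sum_one (k : Fin d) (m : Fin n) (s : Fin d → Fin n)
    (hs : s k = m) (w : (Fin d → Fin n) → ℝ)
    (hz : ∀ i, i k = m → i ≠ s → w i = 0) :
    ∑ i ∈ Finset.univ.filter (fun i : Fin d → Fin n => i k = m), w i = w s := by
  have h : ∀ i ∈ Finset.univ.filter (fun i : Fin d → Fin n => i k = m),
      w i = (if i = s then w s else 0) := by
    intro i hi
    simp only [Finset.mem_filter, Finset.mem_univ, true_and] at hi
    by_cases h1 : i = s
    · subst h1; simp
    · simp [h1, hz i hi h1]
  rw [Finset.sum_congr rfl h, sum_delta, if_pos hs]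

lemma sum_constpart (hd : 3 ≤ d) (k : Fin d) (m : Fin n) :
    ∑ i ∈ Finset.univ.filter (fun i : Fin d → Fin n => i k = m),
      (if C hd i then (1:ℝ) else 0) = if 2 ≤ m.val then 1 else 0 := by
  by_cases hm : 2 ≤ m.val
  · rw [if_pos hm]
    have h : ∀ i ∈ Finset.univ.filter (fun i : Fin d → Fin n => i k = m),
        (if C hd i then (1:ℝ) else 0) = (if i = (fun _ => m) then (1:ℝ) else 0) := by
      intro i hi
      simp only [Finset.mem_filter, Finset.mem_univ, true_and] at hi
      by_cases hC : C hd i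
      · rw [if_pos hC, if_pos]
        have hk0 : i (k0 hd) = m := by rw [← hC.2 k, hi]
        funext j
        rw [hC.2 j, hk0]
      · rw [if_neg hC, if_neg]
        intro h
        apply hC
        subst h
        exact ⟨hm, fun _ => rfl⟩
    rw [Finset.sum_congr rfl h, sum_delta, if_pos rfl]
  · rw [if_neg hm]
    apply Finset.sum_eq_zero
    intro i hi
    simp only [Finset.mem_filter, Finset.mem_univ, true_and] at hi
    rw [if_neg]
    rintro ⟨h2, hc⟩
    have : (i (k0 hd)).val = m.val := by rw [← hc k, hi]
    omega


noncomputable def X (hd : 3 ≤ d) (hn : 2 ≤ n) : (Fin d → Fin n) → ℝ := fun i =>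
  (if i = pa hd hn then 2⁻¹ else 0) + (if i = pb hd hn then 2⁻¹ else 0) +
  (if i = pc hd hn then 2⁻¹ else 0) + (if i = pp hd hn then 2⁻¹ else 0) +
  (if C hd i then 1 else 0)


lemma X_feas (hd : 3 ≤ d) (hn : 2 ≤ n) : X hd hn ∈ APFeasible d n := by
  constructor
  · intro i
    unfold X
    refine add_nonneg (add_nonneg (add_nonneg (add_nonneg ?_ ?_) ?_) ?_) ?_ <;>
      split <;> norm_num
  · intro k m
    unfold X
    rw [Finset.sum_add_distrib, Finset.sum_add_distrib, Finset.sum_add_distrib,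
      Finset.sum_add_distrib, sum_delta, sum_delta, sum_delta, sum_delta, sum_constpart]
    have hm3 : m = v0 hn ∨ m = v1 hn ∨ 2 ≤ m.val := by
      rcases Nat.lt_or_ge m.val 2 with h | h
      · rcases Nat.lt_or_ge m.val 1 with h1 | h1
        · left; exact Fin.ext (by simp only [v0_val]; omega)
        · right; left; exact Fin.ext (by simp only [v1_val]; omega)
      · right; right; exact h
    rcases hm3 with hm | hm | hm
    · subst hm
      rcases eq_or_ne k (k0 hd) with hk | hk
      · subst hk
        simp [pa, pb, pc, pp, (k1_ne_k0 hd).symm, (v0_ne_v1 hn).symm, v0, v1, Fin.ext_iff]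
        norm_num
      · rcases eq_or_ne k (k1 hd) with hk1 | hk1
        · subst hk1
          simp [pa, pb, pc, pp, k1_ne_k0 hd, (v0_ne_v1 hn).symm, v0, v1, Fin.ext_iff]
          norm_num
        · simp [pa, pb, pc, pp, hk, hk1, (v0_ne_v1 hn).symm, v0, v1, Fin.ext_iff]
          norm_num
    · subst hm
      rcases eq_or_ne k (k0 hd) with hk | hk
      · subst hk
        simp [pa, pb, pc, pp, (k1_ne_k0 hd).symm, v0_ne_v1 hn, v0, v1, Fin.ext_iff]
        norm_num
      · rcases eq_or_ne k (k1 hd) with hk1 | hk1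
        · subst hk1
          simp [pa, pb, pc, pp, k1_ne_k0 hd, v0_ne_v1 hn, v0, v1, Fin.ext_iff]
          norm_num
        · simp [pa, pb, pc, pp, hk, hk1, v0_ne_v1 hn, v0, v1, Fin.ext_iff]
          norm_num
    · have hm0 : v0 hn ≠ m := by
        intro h; rw [← h] at hm; simp [v0] at hm
      have hm1 : v1 hn ≠ m := by
        intro h; rw [← h] at hm; simp [v1] at hm
      have hb : pb hd hn k ≠ m := by unfold pb; split <;> assumption
      have hc : pc hd hn k ≠ m := by unfold pc; split <;> assumption
      have hp : pp hd hn k ≠ m := by unfold pp; split <;> assumption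
      simp [pa, hm0, hb, hc, hp, hm]

lemma pb_k0 (hd : 3 ≤ d) (hn : 2 ≤ n) : pb hd hn (k0 hd) = v0 hn := if_pos rfl
lemma pc_k0 (hd : 3 ≤ d) (hn : 2 ≤ n) : pc hd hn (k0 hd) = v1 hn :=
  if_neg (k1_ne_k0 hd).symm
lemma pc_k1 (hd : 3 ≤ d) (hn : 2 ≤ n) : pc hd hn (k1 hd) = v0 hn := if_pos rfl
lemma pb_k1 (hd : 3 ≤ d) (hn : 2 ≤ n) : pb hd hn (k1 hd) = v1 hn :=
  if_neg (k1_ne_k0 hd)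
lemma pp_k0 (hd : 3 ≤ d) (hn : 2 ≤ n) : pp hd hn (k0 hd) = v1 hn :=
  if_pos (Or.inl rfl)
lemma pp_k1 (hd : 3 ≤ d) (hn : 2 ≤ n) : pp hd hn (k1 hd) = v1 hn :=
  if_pos (Or.inr rfl)
lemma pp_k2 (hd : 3 ≤ d) (hn : 2 ≤ n) : pp hd hn (k2 hd) = v0 hn :=
  if_neg (by push_neg; exact ⟨k2_ne_k0 hd, k2_ne_k1 hd⟩)
lemma pb_k2 (hd : 3 ≤ d) (hn : 2 ≤ n) : pb hd hn (k2 hd) = v1 hn :=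
  if_neg (k2_ne_k0 hd)
lemma pc_k2 (hd : 3 ≤ d) (hn : 2 ≤ n) : pc hd hn (k2 hd) = v1 hn :=
  if_neg (k2_ne_k1 hd)

lemma X_eq_zero (hd : 3 ≤ d) (hn : 2 ≤ n) (i : Fin d → Fin n)
    (h1 : i ≠ pa hd hn) (h2 : i ≠ pb hd hn) (h3 : i ≠ pc hd hn)
    (h4 : i ≠ pp hd hn) (h5 : ¬ C hd i) : X hd hn i = 0 := by
  unfold X
  simp [h1, h2, h3, h4, h5]

lemma notC_small (hd : 3 ≤ d) {k : Fin d} {m : Fin n} {i : Fin d → Fin n}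
    (hik : i k = m) (hm : m.val < 2) : ¬ C hd i := by
  rintro ⟨hv, hc⟩
  have : (i (k0 hd)).val = m.val := by rw [← hc k, hik]
  omega

lemma ne_of_apply_ne {i t : Fin d → Fin n} (k : Fin d) (h : i k ≠ t k) : i ≠ t :=
  fun he => h (by rw [he])

lemma X_pa (hd : 3 ≤ d) (hn : 2 ≤ n) : X hd hn (pa hd hn) = 2⁻¹ := by
  unfold X
  have h5 : ¬ C hd (pa hd hn) := notC_small hd (k := k0 hd) rfl (by exact Nat.zero_lt_two)
  simp [pa_ne_pb hd hn, pa_ne_pc hd hn, pa_ne_pp hd hn, h5]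

lemma X_unique (hd : 3 ≤ d) (hn : 2 ≤ n) (w : (Fin d → Fin n) → ℝ)
    (hw : w ∈ APFeasible d n) (h0 : ∀ i, X hd hn i = 0 → w i = 0) :
    w = X hd hn := by
  have hv01 := v0_ne_v1 hn
  -- equation 1 : line (k0, v0) : w pa + w pb = 1
  have E1 : w (pa hd hn) + w (pb hd hn) = 1 := by
    rw [← hw.2 (k0 hd) (v0 hn)]
    refine (sum_two _ _ _ _ (pa_ne_pb hd hn) rfl (pb_k0 hd hn) w ?_).symm
    intro i hik h1 h2
    refine h0 i (X_eq_zero hd hn i h1 h2 ?_ ?_ (notC_small hd hik (by exact Nat.zero_lt_two)))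
    · exact ne_of_apply_ne (k0 hd) (by rw [hik, pc_k0]; exact hv01)
    · exact ne_of_apply_ne (k0 hd) (by rw [hik, pp_k0]; exact hv01)
  -- equation 2 : line (k1, v0) : w pa + w pc = 1
  have E2 : w (pa hd hn) + w (pc hd hn) = 1 := by
    rw [← hw.2 (k1 hd) (v0 hn)]
    refine (sum_two _ _ _ _ (pa_ne_pc hd hn) rfl (pc_k1 hd hn) w ?_).symm
    intro i hik h1 h3
    refine h0 i (X_eq_zero hd hn i h1 ?_ h3 ?_ (notC_small hd hik (by exact Nat.zero_lt_two)))
    · exact ne_of_apply_ne (k1 hd) (by rw [hik, pb_k1]; exact hv01)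
    · exact ne_of_apply_ne (k1 hd) (by rw [hik, pp_k1]; exact hv01)
  -- equation 3 : line (k2, v0) : w pa + w pp = 1
  have E3 : w (pa hd hn) + w (pp hd hn) = 1 := by
    rw [← hw.2 (k2 hd) (v0 hn)]
    refine (sum_two _ _ _ _ (pa_ne_pp hd hn) rfl (pp_k2 hd hn) w ?_).symm
    intro i hik h1 h4
    refine h0 i (X_eq_zero hd hn i h1 ?_ ?_ h4 (notC_small hd hik (by exact Nat.zero_lt_two)))
    · exact ne_of_apply_ne (k2 hd) (by rw [hik, pb_k2]; exact hv01)
    · exact ne_of_apply_ne (k2 hd) (by rw [hik, pc_k2]; exact hv01)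
  -- equation 4 : line (k0, v1) : w pc + w pp = 1
  have E4 : w (pc hd hn) + w (pp hd hn) = 1 := by
    rw [← hw.2 (k0 hd) (v1 hn)]
    refine (sum_two _ _ _ _ (pc_ne_pp hd hn) (pc_k0 hd hn) (pp_k0 hd hn) w ?_).symm
    intro i hik h3 h4
    refine h0 i (X_eq_zero hd hn i ?_ ?_ h3 h4 (notC_small hd hik (by exact Nat.one_lt_two)))
    · exact ne_of_apply_ne (k0 hd) (by rw [hik]; exact hv01.symm)
    · exact ne_of_apply_ne (k0 hd) (by rw [hik, pb_k0]; exact hv01.symm)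
  have ha : w (pa hd hn) = 2⁻¹ := by linarith
  have hb : w (pb hd hn) = 2⁻¹ := by linarith
  have hc : w (pc hd hn) = 2⁻¹ := by linarith
  have hp : w (pp hd hn) = 2⁻¹ := by linarith
  funext i
  by_cases h1 : i = pa hd hn
  · subst h1; rw [ha, X_pa]
  by_cases h2 : i = pb hd hn
  · subst h2
    rw [hb]
    unfold X
    have h5 : ¬ C hd (pb hd hn) := notC_small hd (k := k0 hd) (pb_k0 hd hn) (by exact Nat.zero_lt_two)
    simp [(pa_ne_pb hd hn).symm, pb_ne_pc hd hn, pb_ne_pp hd hn, h5]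
  by_cases h3 : i = pc hd hn
  · subst h3
    rw [hc]
    unfold X
    have h5 : ¬ C hd (pc hd hn) := notC_small hd (k := k1 hd) (pc_k1 hd hn) (by exact Nat.zero_lt_two)
    simp [(pa_ne_pc hd hn).symm, (pb_ne_pc hd hn).symm, pc_ne_pp hd hn, h5]
  by_cases h4 : i = pp hd hn
  · subst h4
    rw [hp]
    unfold X
    have h5 : ¬ C hd (pp hd hn) := notC_small hd (k := k2 hd) (pp_k2 hd hn) (by exact Nat.zero_lt_two)
    simp [(pa_ne_pp hd hn).symm, (pb_ne_pp hd hn).symm, (pc_ne_pp hd hn).symm, h5]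
  by_cases h5 : C hd i
  · -- w i = 1 = X i
    have hXi : X hd hn i = 1 := by
      unfold X
      simp [h1, h2, h3, h4, h5]
    rw [hXi]
    rw [← hw.2 (k0 hd) (i (k0 hd))]
    refine (sum_one (k0 hd) (i (k0 hd)) i rfl w ?_).symm
    intro j hjk hji
    have hval : (j (k0 hd)).val = (i (k0 hd)).val := by rw [hjk]
    refine h0 j (X_eq_zero hd hn j ?_ ?_ ?_ ?_ ?_)
    · refine ne_of_apply_ne (k0 hd) ?_
      intro he
      rw [he] at hval
      have := h5.1
      simp [pa] at hval
      omega
    · refine ne_of_apply_ne (k0 hd) ?_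
      intro he
      rw [he, pb_k0] at hval
      have := h5.1
      simp at hval
      omega
    · refine ne_of_apply_ne (k0 hd) ?_
      intro he
      rw [he, pc_k0] at hval
      have := h5.1
      simp at hval
      omega
    · refine ne_of_apply_ne (k0 hd) ?_
      intro he
      rw [he, pp_k0] at hval
      have := h5.1
      simp at hval
      omega
    · rintro ⟨_, hcj⟩
      apply hji
      funext l
      rw [hcj l, hjk, ← h5.2 l]
  · rw [h0 i (X_eq_zero hd hn i h1 h2 h3 h4 h5), X_eq_zero hd hn i h1 h2 h3 h4 h5]

end APaux

open APaux in
/-- For `d ≥ 3` and `n ≥ 2` the feasible polytope of the relaxed axial `d`-AP has a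
vertex (extreme point) which does not have all entries in `{0,1}`. -/
theorem stmt8 {d n : ℕ} (hd : 3 ≤ d) (hn : 2 ≤ n) :
    ∃ x ∈ Set.extremePoints ℝ (APFeasible d n), ∃ i, x i ≠ 0 ∧ x i ≠ 1 := by
  refine ⟨X hd hn, ?_, pa hd hn, ?_, ?_⟩
  · rw [mem_extremePoints]
    refine ⟨X_feas hd hn, fun y hy z hz hseg => ?_⟩
    obtain ⟨ta, tb, hta, htb, htab, hsum⟩ := hseg
    have h0 : ∀ i, X hd hn i = 0 → y i = 0 ∧ z i = 0 := by
      intro i hXi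
      have he : ta * y i + tb * z i = 0 := by
        have h := congrFun hsum i
        simpa [hXi] using h
      have hy' : 0 ≤ ta * y i := mul_nonneg hta.le (hy.1 i)
      have hz' : 0 ≤ tb * z i := mul_nonneg htb.le (hz.1 i)
      have hy0 : ta * y i = 0 := by linarith
      have hz0 : tb * z i = 0 := by linarith
      exact ⟨(mul_eq_zero.mp hy0).resolve_left (ne_of_gt hta),
        (mul_eq_zero.mp hz0).resolve_left (ne_of_gt htb)⟩
    exact ⟨X_unique hd hn y hy (fun i h => (h0 i h).1),
      X_unique hd hn z hz (fun i h => (h0 i h).2)⟩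
  · rw [X_pa]; norm_num
  · rw [X_pa]; norm_num
end

section
/- Let f : [0,1]^d → ℝ be continuous and let f_n^min, f_n^max be its piecewise-constant lower and upper discretizations on the grid of mesh 1/n. Then min over d-fold stochastic measures μ of ∫ f_n^min dμ ≤ inf over d-fold stochastic measures of ∫ f dμ ≤ min over d-fold stochastic measures of ∫ f_n^max dμ, and both outer quantities converge to the middle infimum as n → ∞. -/
open MeasureTheory

/-- A probability measure on `ℝ^d` is `d`-fold stochastic if each of its one-dimensional
marginals is the uniform (Lebesgue) measure on `[0,1]`. -/
def IsDFoldStochastic {d : ℕ} (μ : Measure (Fin d → ℝ)) : Prop :=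
  IsProbabilityMeasure μ ∧
    ∀ i : Fin d, μ.map (fun x => x i) = volume.restrict (Set.Icc (0 : ℝ) 1)

/-- The unit cube `[0,1]^d`. -/
def unitCube (d : ℕ) : Set (Fin d → ℝ) :=
  Set.univ.pi fun _ => Set.Icc (0 : ℝ) 1

/-- The closed grid cube of mesh `1/n` containing the point `x ∈ [0,1]^d`. -/
def cubeOf (d n : ℕ) (x : Fin d → ℝ) : Set (Fin d → ℝ) :=
  Set.univ.pi fun k =>
    Set.Icc ((min ⌊x k * n⌋₊ (n - 1) : ℕ) / n : ℝ)
      (((min ⌊x k * n⌋₊ (n - 1) : ℕ) + 1) / n)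


/-!
A `d`-fold stochastic measure is concentrated on `[0,1]^d` with mass one there, so integrating the
pointwise inequalities `f_n^min ≤ f ≤ f_n^max` against it and taking infima gives the sandwich.
Grid cubes have diameter at most `1/n`, so uniform continuity of `f` on the compact cube gives
`f_n^max ≤ f_n^min + ε` for large `n`; integrating again, the two outer infima differ by at most `ε`,
and both converge to the middle one.
-/

open Set Filter Topology

section GridCubes

variable {d n : ℕ}

lemma isCompact_unitCube (d : ℕ) : IsCompact (unitCube d) :=
  isCompact_univ_pi fun _ => isCompact_Icc

lemma measurableSet_unitCube (d : ℕ) : MeasurableSet (unitCube d) :=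
  MeasurableSet.univ_pi fun _ => measurableSet_Icc

lemma isCompact_cubeOf (d n : ℕ) (x : Fin d → ℝ) : IsCompact (cubeOf d n x) :=
  isCompact_univ_pi fun _ => isCompact_Icc

lemma cubeOf_subset_unitCube (hn : 0 < n) (x : Fin d → ℝ) : cubeOf d n x ⊆ unitCube d := by
  intro y hy k _
  obtain ⟨hlo, hhi⟩ := hy k (mem_univ k)
  have hn' : (0 : ℝ) < n := by exact_mod_cast hn
  have hm : ((min ⌊x k * n⌋₊ (n - 1) : ℕ) : ℝ) + 1 ≤ n := by
    exact_mod_cast (show min ⌊x k * n⌋₊ (n - 1) + 1 ≤ n by omega)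
  exact ⟨(by positivity : (0 : ℝ) ≤ _).trans hlo, hhi.trans ((div_le_one hn').2 hm)⟩

lemma self_mem_cubeOf (hn : 0 < n) {x : Fin d → ℝ} (hx : x ∈ unitCube d) : x ∈ cubeOf d n x := by
  intro k _
  obtain ⟨hx0, hx1⟩ := hx k (mem_univ k)
  have hn' : (0 : ℝ) < n := by exact_mod_cast hn
  have hxn : 0 ≤ x k * n := by positivity
  refine ⟨(div_le_iff₀ hn').2 ?_, (le_div_iff₀ hn').2 ?_⟩
  · exact (Nat.cast_le.2 (min_le_left _ _)).trans (Nat.floor_le hxn)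
  · have hm : ((min ⌊x k * n⌋₊ (n - 1) : ℕ) : ℝ) + 1 = ((min (⌊x k * n⌋₊ + 1) n : ℕ) : ℝ) := by
      exact_mod_cast (show min ⌊x k * n⌋₊ (n - 1) + 1 = min (⌊x k * n⌋₊ + 1) n by omega)
    rw [hm, Nat.cast_min, Nat.cast_add_one]
    exact le_min (Nat.lt_floor_add_one _).le (by nlinarith)

lemma dist_le_of_mem_cubeOf (hn : 0 < n) {x y z : Fin d → ℝ}
    (hy : y ∈ cubeOf d n x) (hz : z ∈ cubeOf d n x) : dist y z ≤ 1 / n := by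
  refine (dist_pi_le_iff (by positivity)).2 fun k => ?_
  refine (Real.dist_le_of_mem_Icc (hy k (mem_univ k)) (hz k (mem_univ k))).trans_eq ?_
  ring

end GridCubes

section StochasticMeasures

instance : IsProbabilityMeasure (volume.restrict (Icc (0 : ℝ) 1)) :=
  ⟨by simp [Real.volume_Icc]⟩

lemma isDFoldStochastic_pi (d : ℕ) :
    IsDFoldStochastic (Measure.pi fun _ : Fin d => volume.restrict (Icc (0 : ℝ) 1)) :=
  ⟨inferInstance, fun i => (measurePreserving_eval _ i).map_eq⟩

variable {d : ℕ} {μ : Measure (Fin d → ℝ)} {g h : (Fin d → ℝ) → ℝ}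

lemma IsDFoldStochastic.ae_mem_unitCube (hμ : IsDFoldStochastic μ) : ∀ᵐ x ∂μ, x ∈ unitCube d := by
  have hcoord (i : Fin d) : ∀ᵐ x ∂μ, x i ∈ Icc (0 : ℝ) 1 := by
    refine ae_of_ae_map (measurable_pi_apply i).aemeasurable ?_
    rw [hμ.2 i]
    exact ae_restrict_mem measurableSet_Icc
  filter_upwards [ae_all_iff.2 hcoord] with x hx i _ using hx i

lemma IsDFoldStochastic.restrict_unitCube (hμ : IsDFoldStochastic μ) :
    μ.restrict (unitCube d) = μ :=
  Measure.restrict_eq_self_of_ae_mem hμ.ae_mem_unitCube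

lemma IsDFoldStochastic.measure_unitCube (hμ : IsDFoldStochastic μ) : μ (unitCube d) = 1 := by
  have := hμ.1
  rw [← Measure.restrict_apply_univ, hμ.restrict_unitCube, measure_univ]

lemma IsDFoldStochastic.setIntegral_const (hμ : IsDFoldStochastic μ) (c : ℝ) :
    ∫ _ in unitCube d, c ∂μ = c := by
  have := hμ.1
  rw [hμ.restrict_unitCube, integral_const, probReal_univ, one_smul]

lemma IsDFoldStochastic.norm_setIntegral_le (hμ : IsDFoldStochastic μ) {C : ℝ}
    (hC : ∀ x ∈ unitCube d, ‖g x‖ ≤ C) : ‖∫ x in unitCube d, g x ∂μ‖ ≤ C := by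
  have := hμ.1
  simpa [measureReal_def, hμ.measure_unitCube] using
    norm_setIntegral_le_of_norm_le_const (measure_lt_top μ _) hC

lemma IsDFoldStochastic.integrableOn_of_norm_le (hμ : IsDFoldStochastic μ)
    (hg : AEStronglyMeasurable g μ) {C : ℝ} (hC : ∀ x ∈ unitCube d, ‖g x‖ ≤ C) :
    IntegrableOn g (unitCube d) μ := by
  have := hμ.1
  exact IntegrableOn.of_bound (measure_lt_top μ _) hg.restrict C
    ((ae_restrict_iff' (measurableSet_unitCube d)).2 (Eventually.of_forall hC))

lemma IsDFoldStochastic.setIntegral_le_add (hμ : IsDFoldStochastic μ)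
    (hg : IntegrableOn g (unitCube d) μ) (hh : IntegrableOn h (unitCube d) μ) {c : ℝ}
    (hle : ∀ x ∈ unitCube d, g x ≤ h x + c) :
    ∫ x in unitCube d, g x ∂μ ≤ ∫ x in unitCube d, h x ∂μ + c := by
  have := hμ.1
  calc ∫ x in unitCube d, g x ∂μ ≤ ∫ x in unitCube d, (h x + c) ∂μ :=
        setIntegral_mono_on hg (hh.add (integrableOn_const (measure_ne_top μ _)))
          (measurableSet_unitCube d) hle
    _ = ∫ x in unitCube d, h x ∂μ + c := by
        rw [integral_add hh (integrable_const c), hμ.setIntegral_const]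

end StochasticMeasures

noncomputable def gridMin {d : ℕ} (f : (Fin d → ℝ) → ℝ) (n : ℕ) (x : Fin d → ℝ) : ℝ :=
  sInf (f '' cubeOf d n x)

noncomputable def gridMax {d : ℕ} (f : (Fin d → ℝ) → ℝ) (n : ℕ) (x : Fin d → ℝ) : ℝ :=
  sSup (f '' cubeOf d n x)

section Discretization

variable {d n : ℕ} {f : (Fin d → ℝ) → ℝ}

lemma measurable_image_cubeOf (f : (Fin d → ℝ) → ℝ) (n : ℕ) (g : Set ℝ → ℝ) :
    Measurable fun x => g (f '' cubeOf d n x) := by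
  -- the cube depends on `x` only through the grid index `k ↦ ⌊x k * n⌋₊`, which ranges over a countable type
  have hindex : Measurable fun (x : Fin d → ℝ) (k : Fin d) => ⌊x k * n⌋₊ :=
    measurable_pi_lambda _ fun k => Nat.measurable_floor.comp ((measurable_pi_apply k).mul_const _)
  exact (measurable_of_countable (fun c : Fin d → ℕ => g (f '' univ.pi fun k =>
    Icc ((min (c k) (n - 1) : ℕ) / n : ℝ) (((min (c k) (n - 1) : ℕ) + 1) / n)))).comp hindex

lemma measurable_gridMin (f : (Fin d → ℝ) → ℝ) (n : ℕ) : Measurable (gridMin f n) :=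
  measurable_image_cubeOf f n sInf

lemma measurable_gridMax (f : (Fin d → ℝ) → ℝ) (n : ℕ) : Measurable (gridMax f n) :=
  measurable_image_cubeOf f n sSup

lemma isCompact_image_cubeOf (hf : ContinuousOn f (unitCube d)) (hn : 0 < n) (x : Fin d → ℝ) :
    IsCompact (f '' cubeOf d n x) :=
  (isCompact_cubeOf d n x).image_of_continuousOn (hf.mono (cubeOf_subset_unitCube hn x))

lemma gridMin_le (hf : ContinuousOn f (unitCube d)) (hn : 0 < n) {x : Fin d → ℝ}
    (hx : x ∈ unitCube d) : gridMin f n x ≤ f x :=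
  csInf_le (isCompact_image_cubeOf hf hn x).bddBelow (mem_image_of_mem f (self_mem_cubeOf hn hx))

lemma le_gridMax (hf : ContinuousOn f (unitCube d)) (hn : 0 < n) {x : Fin d → ℝ}
    (hx : x ∈ unitCube d) : f x ≤ gridMax f n x :=
  le_csSup (isCompact_image_cubeOf hf hn x).bddAbove (mem_image_of_mem f (self_mem_cubeOf hn hx))

lemma gridMin_mem_image (hf : ContinuousOn f (unitCube d)) (hn : 0 < n) {x : Fin d → ℝ}
    (hx : x ∈ unitCube d) : gridMin f n x ∈ f '' cubeOf d n x :=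
  (isCompact_image_cubeOf hf hn x).sInf_mem ⟨f x, mem_image_of_mem f (self_mem_cubeOf hn hx)⟩

lemma gridMax_mem_image (hf : ContinuousOn f (unitCube d)) (hn : 0 < n) {x : Fin d → ℝ}
    (hx : x ∈ unitCube d) : gridMax f n x ∈ f '' cubeOf d n x :=
  (isCompact_image_cubeOf hf hn x).sSup_mem ⟨f x, mem_image_of_mem f (self_mem_cubeOf hn hx)⟩

lemma norm_le_of_mem_image_cubeOf {C v : ℝ} (hn : 0 < n) (hC : ∀ y ∈ unitCube d, ‖f y‖ ≤ C)
    {x : Fin d → ℝ} (hv : v ∈ f '' cubeOf d n x) : ‖v‖ ≤ C := by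
  obtain ⟨y, hy, rfl⟩ := hv
  exact hC y (cubeOf_subset_unitCube hn x hy)

lemma norm_gridMin_le (hf : ContinuousOn f (unitCube d)) (hn : 0 < n) {C : ℝ}
    (hC : ∀ y ∈ unitCube d, ‖f y‖ ≤ C) (x : Fin d → ℝ) (hx : x ∈ unitCube d) :
    ‖gridMin f n x‖ ≤ C :=
  norm_le_of_mem_image_cubeOf hn hC (gridMin_mem_image hf hn hx)

lemma norm_gridMax_le (hf : ContinuousOn f (unitCube d)) (hn : 0 < n) {C : ℝ}
    (hC : ∀ y ∈ unitCube d, ‖f y‖ ≤ C) (x : Fin d → ℝ) (hx : x ∈ unitCube d) :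
    ‖gridMax f n x‖ ≤ C :=
  norm_le_of_mem_image_cubeOf hn hC (gridMax_mem_image hf hn hx)

lemma eventually_gridMax_le_gridMin_add (hf : ContinuousOn f (unitCube d)) {ε : ℝ}
    (hε : 0 < ε) : ∀ᶠ n : ℕ in atTop, ∀ x ∈ unitCube d, gridMax f n x ≤ gridMin f n x + ε := by
  obtain ⟨δ, hδ, hfδ⟩ := Metric.uniformContinuousOn_iff.1
    ((isCompact_unitCube d).uniformContinuousOn_of_continuous hf) ε hε
  filter_upwards [eventually_gt_atTop 0,
    tendsto_one_div_atTop_nhds_zero_nat.eventually (gt_mem_nhds hδ)] with n hn hnδ x hx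
  obtain ⟨a, ha, hfa⟩ := gridMax_mem_image hf hn hx
  obtain ⟨b, hb, hfb⟩ := gridMin_mem_image hf hn hx
  have hab := hfδ a (cubeOf_subset_unitCube hn x ha) b (cubeOf_subset_unitCube hn x hb)
    ((dist_le_of_mem_cubeOf hn ha hb).trans_lt hnδ)
  rw [← hfa, ← hfb]
  linarith [le_abs_self (f a - f b), Real.dist_eq (f a) (f b)]

lemma IsDFoldStochastic.integrableOn_of_continuousOn {μ : Measure (Fin d → ℝ)}
    (hμ : IsDFoldStochastic μ) (hf : ContinuousOn f (unitCube d)) :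
    IntegrableOn f (unitCube d) μ :=
  have := hμ.1
  hf.integrableOn_compact (isCompact_unitCube d)

lemma IsDFoldStochastic.integrableOn_gridMin {μ : Measure (Fin d → ℝ)} (hμ : IsDFoldStochastic μ)
    (hf : ContinuousOn f (unitCube d)) (hn : 0 < n) : IntegrableOn (gridMin f n) (unitCube d) μ :=
  have ⟨_, hC⟩ := (isCompact_unitCube d).exists_bound_of_continuousOn hf
  hμ.integrableOn_of_norm_le (measurable_gridMin f n).aestronglyMeasurable (norm_gridMin_le hf hn hC)

lemma IsDFoldStochastic.integrableOn_gridMax {μ : Measure (Fin d → ℝ)} (hμ : IsDFoldStochastic μ)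
    (hf : ContinuousOn f (unitCube d)) (hn : 0 < n) : IntegrableOn (gridMax f n) (unitCube d) μ :=
  have ⟨_, hC⟩ := (isCompact_unitCube d).exists_bound_of_continuousOn hf
  hμ.integrableOn_of_norm_le (measurable_gridMax f n).aestronglyMeasurable (norm_gridMax_le hf hn hC)

end Discretization

section StochasticValues

variable {d : ℕ} {g h : (Fin d → ℝ) → ℝ}

def stochasticValues (d : ℕ) (g : (Fin d → ℝ) → ℝ) : Set ℝ :=
  {v | ∃ μ : Measure (Fin d → ℝ), IsDFoldStochastic μ ∧ v = ∫ x in unitCube d, g x ∂μ}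

lemma sInf_stochasticValues_le_add {C c : ℝ} (hgC : ∀ x ∈ unitCube d, ‖g x‖ ≤ C)
    (hg : ∀ μ, IsDFoldStochastic μ → IntegrableOn g (unitCube d) μ)
    (hh : ∀ μ, IsDFoldStochastic μ → IntegrableOn h (unitCube d) μ)
    (hle : ∀ x ∈ unitCube d, g x ≤ h x + c) :
    sInf (stochasticValues d g) ≤ sInf (stochasticValues d h) + c := by
  have hbdd : BddBelow (stochasticValues d g) := by
    refine ⟨-C, ?_⟩
    rintro _ ⟨μ, hμ, rfl⟩
    exact neg_le_of_abs_le (hμ.norm_setIntegral_le hgC)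
  rw [← sub_le_iff_le_add]
  refine le_csInf ⟨_, _, isDFoldStochastic_pi d, rfl⟩ ?_
  rintro _ ⟨μ, hμ, rfl⟩
  rw [sub_le_iff_le_add]
  exact (csInf_le hbdd ⟨μ, hμ, rfl⟩).trans (hμ.setIntegral_le_add (hg μ hμ) (hh μ hμ) hle)

lemma sInf_stochasticValues_mono {C : ℝ} (hgC : ∀ x ∈ unitCube d, ‖g x‖ ≤ C)
    (hg : ∀ μ, IsDFoldStochastic μ → IntegrableOn g (unitCube d) μ)
    (hh : ∀ μ, IsDFoldStochastic μ → IntegrableOn h (unitCube d) μ)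
    (hle : ∀ x ∈ unitCube d, g x ≤ h x) :
    sInf (stochasticValues d g) ≤ sInf (stochasticValues d h) := by
  simpa using sInf_stochasticValues_le_add (c := 0) hgC hg hh (by simpa using hle)

end StochasticValues

lemma tendsto_of_le_of_le_of_eventually_le_add {α : Type*} {l : Filter α} {a b : α → ℝ} {L : ℝ}
    (ha : ∀ᶠ n in l, a n ≤ L) (hb : ∀ᶠ n in l, L ≤ b n)
    (hab : ∀ ε > 0, ∀ᶠ n in l, b n ≤ a n + ε) : Tendsto a l (𝓝 L) ∧ Tendsto b l (𝓝 L) := by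
  constructor <;>
  · refine Metric.tendsto_nhds.2 fun ε hε => ?_
    filter_upwards [ha, hb, hab (ε / 2) (half_pos hε)] with n han hbn habn
    rw [Real.dist_eq, abs_lt]
    constructor <;> linarith

/-- For continuous `f` on `[0,1]^d` with grid discretizations `f_n^min ≤ f ≤ f_n^max`, the
optimal values `min_μ ∫ f_n^min dμ` and `min_μ ∫ f_n^max dμ` over `d`-fold stochastic
measures sandwich `inf_μ ∫ f dμ` and both converge to it as `n → ∞`. -/
theorem stmt10 {d : ℕ} (f : (Fin d → ℝ) → ℝ) (hf : ContinuousOn f (unitCube d))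
    (fmax fmin : ℕ → (Fin d → ℝ) → ℝ)
    (hmax : ∀ n x, fmax n x = sSup (f '' cubeOf d n x))
    (hmin : ∀ n x, fmin n x = sInf (f '' cubeOf d n x)) :
    (∀ n, 0 < n →
      sInf {v : ℝ | ∃ μ : Measure (Fin d → ℝ),
          IsDFoldStochastic μ ∧ v = ∫ x in unitCube d, fmin n x ∂μ}
        ≤ sInf {v : ℝ | ∃ μ : Measure (Fin d → ℝ),
          IsDFoldStochastic μ ∧ v = ∫ x in unitCube d, f x ∂μ} ∧
      sInf {v : ℝ | ∃ μ : Measure (Fin d → ℝ),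
          IsDFoldStochastic μ ∧ v = ∫ x in unitCube d, f x ∂μ}
        ≤ sInf {v : ℝ | ∃ μ : Measure (Fin d → ℝ),
          IsDFoldStochastic μ ∧ v = ∫ x in unitCube d, fmax n x ∂μ}) ∧
    Filter.Tendsto (fun n : ℕ =>
        sInf {v : ℝ | ∃ μ : Measure (Fin d → ℝ),
          IsDFoldStochastic μ ∧ v = ∫ x in unitCube d, fmin n x ∂μ})
      Filter.atTop
      (nhds (sInf {v : ℝ | ∃ μ : Measure (Fin d → ℝ),
          IsDFoldStochastic μ ∧ v = ∫ x in unitCube d, f x ∂μ})) ∧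
    Filter.Tendsto (fun n : ℕ =>
        sInf {v : ℝ | ∃ μ : Measure (Fin d → ℝ),
          IsDFoldStochastic μ ∧ v = ∫ x in unitCube d, fmax n x ∂μ})
      Filter.atTop
      (nhds (sInf {v : ℝ | ∃ μ : Measure (Fin d → ℝ),
          IsDFoldStochastic μ ∧ v = ∫ x in unitCube d, f x ∂μ})) := by
  obtain rfl : fmin = gridMin f := funext₂ hmin
  obtain rfl : fmax = gridMax f := funext₂ hmax
  obtain ⟨C, hC⟩ := (isCompact_unitCube d).exists_bound_of_continuousOn hf
  have hlower {n} (hn : 0 < n) :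
      sInf (stochasticValues d (gridMin f n)) ≤ sInf (stochasticValues d f) :=
    sInf_stochasticValues_mono (norm_gridMin_le hf hn hC)
      (fun _ hμ => hμ.integrableOn_gridMin hf hn) (fun _ hμ => hμ.integrableOn_of_continuousOn hf)
      (fun _ => gridMin_le hf hn)
  have hupper {n} (hn : 0 < n) :
      sInf (stochasticValues d f) ≤ sInf (stochasticValues d (gridMax f n)) :=
    sInf_stochasticValues_mono hC (fun _ hμ => hμ.integrableOn_of_continuousOn hf)
      (fun _ hμ => hμ.integrableOn_gridMax hf hn) (fun _ => le_gridMax hf hn)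
  have hgap (ε : ℝ) (hε : 0 < ε) : ∀ᶠ n in atTop,
      sInf (stochasticValues d (gridMax f n)) ≤ sInf (stochasticValues d (gridMin f n)) + ε := by
    filter_upwards [eventually_gt_atTop 0, eventually_gridMax_le_gridMin_add hf hε] with n hn hosc
    exact sInf_stochasticValues_le_add (norm_gridMax_le hf hn hC)
      (fun _ hμ => hμ.integrableOn_gridMax hf hn) (fun _ hμ => hμ.integrableOn_gridMin hf hn) hosc
  have hpos : ∀ᶠ n : ℕ in atTop, 0 < n := eventually_gt_atTop 0
  exact ⟨fun n hn => ⟨hlower hn, hupper hn⟩, tendsto_of_le_of_le_of_eventually_le_add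
    (hpos.mono fun _ => hlower) (hpos.mono fun _ => hupper) hgap⟩
end

section
/- Let c : X_1 × ⋯ × X_d → ℝ be continuous on a product of compact metric spaces. Suppose Γ_n ⊆ X_1 × ⋯ × X_d are sets and μ_n are probability measures with μ_n(Γ_n) = 1, each Γ_n is c_n-cyclically monotone for continuous functions c_n converging uniformly to c, and μ_n → μ weakly. Then μ is concentrated on a c-cyclically monotone set. -/
/-!
Take for `Γ'` the Kuratowski lower limit of the sets `Γ n`: the points every neighbourhood of
which meets `Γ n` for all large `n`. Finitely many points of it are simultaneously approximated
by points of a single `Γ n` with `n` large; along such approximations both sides of the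
`cs n`-cyclical monotonicity inequality converge to the corresponding sides for `c`, by uniform
convergence and continuity of `c`, so `Γ'` is `c`-cyclically monotone. By the portmanteau theorem
every open set of positive `μ`-measure has positive `μs n`-measure for large `n`, hence meets
`Γ n`; so `Γ'` contains the support of `μ`, which has full measure because the product of compact
metric spaces is second countable.
-/

open MeasureTheory Filter Set Topology

/-- A set `Γ ⊆ X_1 × ⋯ × X_d` is `c`-cyclically monotone if for all `N`, all points
`p 1, …, p N ∈ Γ` and all permutations `σ_2, …, σ_d` of `{1,…,N}` (the first coordinate
is not permuted), `∑ j, c (p j) ≤ ∑ j, c (p (σ_1 j) 1, …, p (σ_d j) d)`. -/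
def IsCycMono {d : ℕ} {X : Fin d → Type*} (c : (∀ i, X i) → ℝ)
    (Γ : Set (∀ i, X i)) : Prop :=
  ∀ (N : ℕ) (p : Fin N → ∀ i, X i), (∀ j, p j ∈ Γ) →
    ∀ σ : Fin d → Equiv.Perm (Fin N), (∀ h : 0 < d, σ ⟨0, h⟩ = 1) →
      ∑ j, c (p j) ≤ ∑ j, c (fun i => p (σ i j) i)

def kuratowskiLiminf {ι α : Type*} [TopologicalSpace α] (l : Filter ι) (Γ : ι → Set α) :
    Set α :=
  {x | ∀ U ∈ 𝓝 x, ∀ᶠ n in l, (Γ n ∩ U).Nonempty}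

section kuratowskiLiminf

variable {ι α : Type*} [TopologicalSpace α] {l : Filter ι} {Γ : ι → Set α}

lemma pi_mem_kuratowskiLiminf {J : Type*} [Finite J] {p : J → α}
    (hp : ∀ j, p j ∈ kuratowskiLiminf l Γ) :
    p ∈ kuratowskiLiminf l fun n => univ.pi fun _ => Γ n := by
  intro U hU
  rw [nhds_pi, mem_pi'] at hU
  obtain ⟨I, t, ht, htU⟩ := hU
  filter_upwards [eventually_all.mpr fun j => hp j (t j) (ht j)] with n hn
  choose q hqΓ hqt using hn
  exact ⟨q, fun j _ => hqΓ j, htU fun j _ => hqt j⟩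

lemma neBot_of_mem_kuratowskiLiminf [l.NeBot] {x : α} (hx : x ∈ kuratowskiLiminf l Γ) :
    (l ×ˢ 𝓝 x ⊓ 𝓟 {z | z.2 ∈ Γ z.1}).NeBot := by
  refine inf_principal_neBot_iff.mpr fun W hW => ?_
  obtain ⟨A, hA, U, hU, hAU⟩ := mem_prod_iff.mp hW
  obtain ⟨n, ⟨y, hyΓ, hyU⟩, hnA⟩ := ((hx U hU).and hA).exists
  exact ⟨(n, y), hAU ⟨hnA, hyU⟩, hyΓ⟩

end kuratowskiLiminf

theorem IsCycMono.kuratowskiLiminf {ι : Type*} {l : Filter ι} [l.NeBot] {d : ℕ}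
    {X : Fin d → Type*} [∀ i, TopologicalSpace (X i)] {c : (∀ i, X i) → ℝ} (hc : Continuous c)
    {cs : ι → (∀ i, X i) → ℝ} (hunif : TendstoUniformly cs c l) {Γ : ι → Set (∀ i, X i)}
    (hΓ : ∀ n, IsCycMono (cs n) (Γ n)) : IsCycMono c (kuratowskiLiminf l Γ) := by
  intro N p hp σ hσ
  set L := l ×ˢ 𝓝 p ⊓ 𝓟 {z | z.2 ∈ univ.pi fun _ => Γ z.1}
  have : L.NeBot := neBot_of_mem_kuratowskiLiminf (pi_mem_kuratowskiLiminf hp)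
  have hfst : Tendsto Prod.fst L l := tendsto_fst.mono_left inf_le_left
  have hsnd : Tendsto Prod.snd L (𝓝 p) := tendsto_snd.mono_left inf_le_left
  have hcomp : ∀ φ : (Fin N → ∀ i, X i) → ∀ i, X i, Continuous φ →
      Tendsto (fun z => cs z.1 (φ z.2)) L (𝓝 (c (φ p))) := fun φ hφ =>
    TendstoUniformly.tendsto_comp (fun u hu => hfst.eventually (hunif u hu)) hc.continuousAt
      ((hφ.tendsto p).comp hsnd)
  refine le_of_tendsto_of_tendsto (tendsto_finsetSum _ fun j _ => hcomp _ (continuous_apply j))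
    (tendsto_finsetSum _ fun j _ => hcomp (fun q i => q (σ i j) i) (by fun_prop)) ?_
  filter_upwards [mem_inf_of_right (mem_principal_self _)] with z hz
  exact hΓ z.1 N z.2 (fun j => hz j (mem_univ j)) σ hσ

namespace MeasureTheory.ProbabilityMeasure

variable {Ω ι : Type*} [MeasurableSpace Ω] [TopologicalSpace Ω] [OpensMeasurableSpace Ω]
  [HasOuterApproxClosed Ω] {l : Filter ι} {P : ProbabilityMeasure Ω} {Ps : ι → ProbabilityMeasure Ω}

lemma eventually_measure_pos_of_mem_support (hlim : Tendsto Ps l (𝓝 P)) {x : Ω}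
    (hx : x ∈ (P : Measure Ω).support) {U : Set Ω} (hU : IsOpen U) (hxU : x ∈ U) :
    ∀ᶠ n in l, 0 < (Ps n : Measure Ω) U :=
  eventually_lt_of_lt_liminf <| ((Measure.mem_support_iff_forall x).mp hx U
    (hU.mem_nhds hxU)).trans_le (le_liminf_measure_open_of_tendsto hlim hU)

lemma support_subset_kuratowskiLiminf (hlim : Tendsto Ps l (𝓝 P))
    {Γ : ι → Set Ω} (hΓ : ∀ n, (Ps n : Measure Ω) (Γ n) = 1) :
    (P : Measure Ω).support ⊆ kuratowskiLiminf l Γ := by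
  intro x hx U hU
  filter_upwards [eventually_measure_pos_of_mem_support hlim hx isOpen_interior
    (mem_interior_iff_mem_nhds.mpr hU)] with n hn
  have hfull : (Ps n : Measure Ω) univ <
      (Ps n : Measure Ω) (Γ n) + (Ps n : Measure Ω) (interior U) := by
    simpa [hΓ n] using ENNReal.lt_add_right ENNReal.one_ne_top hn.ne'
  exact (nonempty_inter_of_measure_lt_add _ isOpen_interior.measurableSet (subset_univ _)
    (subset_univ _) hfull).mono (inter_subset_inter_right _ interior_subset)

end MeasureTheory.ProbabilityMeasure

theorem stmt14_general {d : ℕ} {X : Fin d → Type*} [∀ i, MetricSpace (X i)]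
    [∀ i, CompactSpace (X i)] [∀ i, MeasurableSpace (X i)] [∀ i, BorelSpace (X i)]
    (c : (∀ i, X i) → ℝ) (hc : Continuous c)
    (cs : ℕ → (∀ i, X i) → ℝ)
    (hunif : TendstoUniformly cs c Filter.atTop)
    (Γ : ℕ → Set (∀ i, X i)) (hΓ : ∀ n, IsCycMono (cs n) (Γ n))
    (μs : ℕ → Measure (∀ i, X i)) (hprob : ∀ n, IsProbabilityMeasure (μs n))
    (hconc : ∀ n, μs n (Γ n) = 1)
    (μ : Measure (∀ i, X i)) (hμprob : IsProbabilityMeasure μ)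
    (hweak : ∀ g : (∀ i, X i) → ℝ, Continuous g →
      Filter.Tendsto (fun n => ∫ x, g x ∂(μs n)) Filter.atTop (nhds (∫ x, g x ∂μ))) :
    ∃ Γ' : Set (∀ i, X i), IsCycMono c Γ' ∧ μ Γ' = 1 := by
  let P : ProbabilityMeasure (∀ i, X i) := ⟨μ, hμprob⟩
  let Ps n : ProbabilityMeasure (∀ i, X i) := ⟨μs n, hprob n⟩
  have hlim : Tendsto Ps atTop (𝓝 P) :=
    ProbabilityMeasure.tendsto_iff_forall_integral_tendsto.mpr fun f => hweak f f.continuous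
  have hsupp : μ.support ⊆ kuratowskiLiminf atTop Γ :=
    ProbabilityMeasure.support_subset_kuratowskiLiminf (P := P) (Ps := Ps) hlim hconc
  refine ⟨kuratowskiLiminf atTop Γ, IsCycMono.kuratowskiLiminf hc hunif hΓ, ?_⟩
  rw [← measure_univ (μ := μ)]
  exact measure_congr (ae_eq_univ.mpr (measure_mono_null (compl_subset_compl.mpr hsupp)
    μ.measure_compl_support))

/-- If `μ_n → μ` weakly, each `μ_n` is concentrated on a `c_n`-cyclically monotone set,
and the continuous costs `c_n` converge uniformly to the continuous cost `c` on a product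
of compact metric spaces, then `μ` is concentrated on a `c`-cyclically monotone set. -/
theorem stmt14 {d : ℕ} {X : Fin d → Type*} [∀ i, MetricSpace (X i)]
    [∀ i, CompactSpace (X i)] [∀ i, MeasurableSpace (X i)] [∀ i, BorelSpace (X i)]
    (c : (∀ i, X i) → ℝ) (hc : Continuous c)
    (cs : ℕ → (∀ i, X i) → ℝ) (hcs : ∀ n, Continuous (cs n))
    (hunif : TendstoUniformly cs c Filter.atTop)
    (Γ : ℕ → Set (∀ i, X i)) (hΓ : ∀ n, IsCycMono (cs n) (Γ n))
    (μs : ℕ → Measure (∀ i, X i)) (hprob : ∀ n, IsProbabilityMeasure (μs n))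
    (hconc : ∀ n, μs n (Γ n) = 1)
    (μ : Measure (∀ i, X i)) (hμprob : IsProbabilityMeasure μ)
    (hweak : ∀ g : (∀ i, X i) → ℝ, Continuous g →
      Filter.Tendsto (fun n => ∫ x, g x ∂(μs n)) Filter.atTop (nhds (∫ x, g x ∂μ))) :
    ∃ Γ' : Set (∀ i, X i), IsCycMono c Γ' ∧ μ Γ' = 1 :=
  stmt14_general c hc cs hunif Γ hΓ μs hprob hconc μ hμprob hweak
end

section
/- Let α be a finitely supported measure on X_1 × ⋯ × X_d that minimizes ∫ c dα' among all finitely supported measures α' with the same marginals as α, for a cost function c. Then the support of α is c-cyclically monotone: for any points (x_1^{(1)},…,x_d^{(1)}),…,(x_1^{(N)},…,x_d^{(N)}) in the support of α and any permutations σ_2,…,σ_d of {1,…,N}, ∑_i c(x_1^{(i)},…,x_d^{(i)}) ≤ ∑_i c(x_1^{(i)}, x_2^{(σ_2(i))},…,x_d^{(σ_d(i))}). -/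
/-!
Given points `p 1, …, p N` in the support of `α` and permutations `σ_k`, pick `ε > 0` with
`N ε` below every weight `α (p j)`. Then `P = ∑ ε δ_{p j}` is a sub-measure of `α`, and the
shuffled measure `Q = ∑ ε δ_{(p (σ_k j) k)_k}` has the same marginals as `P`, since each
`σ_k` only permutes the atoms of the `k`-th marginal. So `α - P + Q` competes with `α`,
and optimality gives `ε ∑ c (p j) = cost P ≤ cost Q`, the cyclical monotonicity inequality.
-/

open scoped NNReal

open Finsupp

theorem exists_pos_card_mul_le {ι : Type*} [Fintype ι] {a : ι → ℝ≥0}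
    (ha : ∀ j, 0 < a j) :
    ∃ ε : ℝ≥0, 0 < ε ∧ ∀ j, Fintype.card ι * ε ≤ a j := by
  rcases isEmpty_or_nonempty ι with hι | hι
  · exact ⟨1, one_pos, isEmptyElim⟩
  obtain ⟨j₀, hj₀⟩ := Finite.exists_min a
  have hcard : (0 : ℝ≥0) < Fintype.card ι := by exact_mod_cast Fintype.card_pos
  refine ⟨a j₀ / Fintype.card ι, div_pos (ha j₀) hcard, fun j => ?_⟩
  rw [mul_div_cancel₀ _ hcard.ne']
  exact hj₀ j

section Cost

variable {Y : Type*}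

noncomputable def transportCost (c : Y → ℝ) : (Y →₀ ℝ≥0) →+ ℝ :=
  liftAddHom fun y => (AddMonoidHom.mulRight (c y)).comp NNReal.toRealHom.toAddMonoidHom

theorem transportCost_apply (c : Y → ℝ) (β : Y →₀ ℝ≥0) :
    transportCost c β = β.sum fun y w => (w : ℝ) * c y :=
  liftAddHom_apply _ _

variable {ι : Type*} [Fintype ι]

theorem transportCost_sum_single (c : Y → ℝ) (p : ι → Y) (ε : ℝ≥0) :
    transportCost c (∑ j, single (p j) ε) = ε * ∑ j, c (p j) := by
  simp [map_sum, transportCost, Finset.mul_sum]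

theorem sum_single_le_of_card_mul_le {p : ι → Y} {ε : ℝ≥0} {α : Y →₀ ℝ≥0}
    (h : ∀ j, Fintype.card ι * ε ≤ α (p j)) : ∑ j, single (p j) ε ≤ α := by
  classical
  intro x
  rw [finsetSum_apply]
  by_cases hx : ∃ j, p j = x
  · obtain ⟨j₀, rfl⟩ := hx
    calc ∑ j, single (p j) ε (p j₀) ≤ ∑ _j : ι, ε :=
          Finset.sum_le_sum fun j _ => by rw [single_apply]; split_ifs <;> simp
      _ = Fintype.card ι * ε := by simp
      _ ≤ α (p j₀) := h j₀
  · simp [not_exists.1 hx]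

end Cost

section Marginals

variable {κ : Type*} {X : κ → Type*}

theorem transportCost_le_of_marginals_eq {c : (∀ i, X i) → ℝ}
    {α P Q : (∀ i, X i) →₀ ℝ≥0}
    (hopt : ∀ α' : (∀ i, X i) →₀ ℝ≥0,
      (∀ k, mapDomain (fun p => p k) α' = mapDomain (fun p => p k) α) →
        transportCost c α ≤ transportCost c α')
    (hPα : P ≤ α) (hQP : ∀ k, mapDomain (fun p => p k) Q = mapDomain (fun p => p k) P) :
    transportCost c P ≤ transportCost c Q := by
  have hsplit : α - P + P = α := tsub_add_cancel_of_le hPα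
  have hmarg : ∀ k, mapDomain (fun p => p k) (α - P + Q) = mapDomain (fun p => p k) α := by
    intro k
    rw [← hsplit, mapDomain_add, mapDomain_add, hQP, hsplit]
  have hcompare := hopt _ hmarg
  rw [← hsplit, map_add, map_add, hsplit] at hcompare
  linarith

theorem mapDomain_sum_single_shuffle {ι : Type*} [Fintype ι] (p : ι → ∀ i, X i)
    (σ : κ → Equiv.Perm ι) (ε : ℝ≥0) (k : κ) :
    mapDomain (fun q => q k) (∑ j, single (fun i => p (σ i j) i) ε) =
      mapDomain (fun q => q k) (∑ j, single (p j) ε) := by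
  simp only [mapDomain_finsetSum, mapDomain_single]
  exact Equiv.sum_comp (σ k) fun j => single (p j k) ε

end Marginals

theorem stmt15_general {d : ℕ} {X : Fin d → Type*}
    (c : (∀ i, X i) → ℝ) (α : (∀ i, X i) →₀ ℝ≥0)
    (hopt : ∀ α' : (∀ i, X i) →₀ ℝ≥0,
      (∀ k : Fin d,
        Finsupp.mapDomain (fun p => p k) α' = Finsupp.mapDomain (fun p => p k) α) →
      (α.sum fun p w => (w : ℝ) * c p) ≤ α'.sum fun p w => (w : ℝ) * c p) :
    IsCycMono c ↑α.support := by
  simp only [← transportCost_apply] at hopt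
  intro N p hp σ _
  obtain ⟨ε, hε, hεα⟩ :=
    exists_pos_card_mul_le fun j => pos_iff_ne_zero.2 (mem_support_iff.1 (hp j))
  have hcost := transportCost_le_of_marginals_eq hopt (sum_single_le_of_card_mul_le hεα)
    (mapDomain_sum_single_shuffle p σ ε)
  rw [transportCost_sum_single, transportCost_sum_single] at hcost
  exact le_of_mul_le_mul_left hcost (by exact_mod_cast hε)

/-- If a finitely supported (nonnegative) measure `α` on `X_1 × ⋯ × X_d` minimizes
`∫ c dα'` among all finitely supported measures `α'` with the same marginals, then the
support of `α` is `c`-cyclically monotone. -/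
theorem stmt15 {d : ℕ} {X : Fin d → Type*} [∀ i, DecidableEq (X i)]
    (c : (∀ i, X i) → ℝ) (α : (∀ i, X i) →₀ ℝ≥0)
    (hopt : ∀ α' : (∀ i, X i) →₀ ℝ≥0,
      (∀ k : Fin d,
        Finsupp.mapDomain (fun p => p k) α' = Finsupp.mapDomain (fun p => p k) α) →
      (α.sum fun p w => (w : ℝ) * c p) ≤ α'.sum fun p w => (w : ℝ) * c p) :
    IsCycMono c ↑α.support :=
  stmt15_general c α hopt
end
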